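/- arXiv:1705.03180 — 2 statements merged into one kernel-verified Lean document; each statement's English description precedes it below -/
import Mathlib

section
/- Let T be a normal space and U₀, …, U_{n+1} an open cover of T with empty total intersection. If Φ = (φᵢ) and Ψ = (ψᵢ) are two partitions of unity subordinate to the cover, then the associated maps f_Φ(x) = Σᵢ φᵢ(x)vᵢ and f_Ψ(x) = Σᵢ ψᵢ(x)vᵢ into ∂Δ^{n+1} are homotopic as maps T → ∂Δ^{n+1}. -/
open Set unitInterval

noncomputable section

/-- `φ` is a partition of unity subordinate to the cover `U`: each `φ i` takes values in
`[0,1]`, the (closed) support of `φ i` is contained in `U i`, and the `φ i` sum to `1`. -/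
structure IsSubordinatePartitionOfUnity {T : Type} [TopologicalSpace T] {m : ℕ}
    (U : Fin m → Set T) (φ : Fin m → C(T, ℝ)) : Prop where
  nonneg : ∀ i x, 0 ≤ φ i x
  le_one : ∀ i x, φ i x ≤ 1
  subordinate : ∀ i, tsupport (φ i) ⊆ U i
  sum_eq_one : ∀ x, ∑ i, φ i x = 1

/-- The boundary `∂Δ^{n+1}` of the simplex with vertices `v 0, …, v (n+1)`: convex
combinations `Σ tᵢ • vᵢ` with `tᵢ ≥ 0`, `Σ tᵢ = 1` and at least one `tᵢ = 0`. -/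
def simplexBoundary {n : ℕ} (v : Fin (n+2) → EuclideanSpace ℝ (Fin (n+1))) :
    Set (EuclideanSpace ℝ (Fin (n+1))) :=
  {p | ∃ t : Fin (n+2) → ℝ, (∀ i, 0 ≤ t i) ∧ (∑ i, t i) = 1 ∧ (∃ i, t i = 0) ∧
    p = ∑ i, t i • v i}

/-!
A convex combination `(1 - s) Φ + s Ψ` of two partitions of unity subordinate to
`U` is again one. Since the `U i` have empty intersection, every point `x` lies outside some
`U i`, where all such partitions vanish; hence `Σᵢ χᵢ(x) vᵢ` lies on a proper face of the
simplex for every such `χ`, and the straight-line homotopy stays in `∂Δ^{n+1}`.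
-/

namespace IsSubordinatePartitionOfUnity

variable {T : Type} [TopologicalSpace T] {m : ℕ} {U : Fin m → Set T}
  {φ ψ : Fin m → C(T, ℝ)}

theorem apply_eq_zero_of_notMem (hφ : IsSubordinatePartitionOfUnity U φ) {i : Fin m} {x : T}
    (hx : x ∉ U i) : φ i x = 0 :=
  image_eq_zero_of_notMem_tsupport fun h => hx (hφ.subordinate i h)

theorem convexCombination (hφ : IsSubordinatePartitionOfUnity U φ)
    (hψ : IsSubordinatePartitionOfUnity U ψ) (s : I) :
    IsSubordinatePartitionOfUnity U fun i => (1 - (s : ℝ)) • φ i + (s : ℝ) • ψ i := by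
  have hs₀ : (0 : ℝ) ≤ s := s.2.1
  have hs₁ : (0 : ℝ) ≤ 1 - s := by linarith [s.2.2]
  refine ⟨fun i x => ?_, fun i x => ?_, fun i => ?_, fun x => ?_⟩
  · simp only [ContinuousMap.add_apply, ContinuousMap.smul_apply, smul_eq_mul]
    exact add_nonneg (mul_nonneg hs₁ (hφ.nonneg i x)) (mul_nonneg hs₀ (hψ.nonneg i x))
  · simp only [ContinuousMap.add_apply, ContinuousMap.smul_apply, smul_eq_mul]
    nlinarith [hφ.le_one i x, hψ.le_one i x, hφ.nonneg i x, hψ.nonneg i x]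
  · refine (tsupport_add _ _).trans (union_subset ?_ ?_)
    · exact (tsupport_smul_subset_right (fun _ : T => 1 - (s : ℝ)) (φ i)).trans
        (hφ.subordinate i)
    · exact (tsupport_smul_subset_right (fun _ : T => (s : ℝ)) (ψ i)).trans
        (hψ.subordinate i)
  · simp only [ContinuousMap.add_apply, ContinuousMap.smul_apply, smul_eq_mul,
      Finset.sum_add_distrib, ← Finset.mul_sum, hφ.sum_eq_one, hψ.sum_eq_one]
    ring

theorem sum_smul_mem_simplexBoundary {n : ℕ} {U : Fin (n+2) → Set T}
    {φ : Fin (n+2) → C(T, ℝ)} (hφ : IsSubordinatePartitionOfUnity U φ)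
    (hU : (⋂ i, U i) = ∅) (v : Fin (n+2) → EuclideanSpace ℝ (Fin (n+1))) (x : T) :
    ∑ i, φ i x • v i ∈ simplexBoundary v := by
  obtain ⟨i, hi⟩ : ∃ i, x ∉ U i := by
    by_contra! h
    simpa [hU] using mem_iInter.2 h
  exact ⟨fun i => φ i x, (hφ.nonneg · x), hφ.sum_eq_one x,
    ⟨i, hφ.apply_eq_zero_of_notMem hi⟩, rfl⟩

end IsSubordinatePartitionOfUnity

theorem assoc_maps_homotopic_general (n : ℕ) (T : Type)
    [TopologicalSpace T]
    (U : Fin (n+2) → Set T)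
    (hUempty : (⋂ i, U i) = ∅)
    (φ ψ : Fin (n+2) → C(T, ℝ))
    (hφ : IsSubordinatePartitionOfUnity U φ) (hψ : IsSubordinatePartitionOfUnity U ψ)
    (v : Fin (n+2) → EuclideanSpace ℝ (Fin (n+1))) :
    ∃ H : C(T × unitInterval, EuclideanSpace ℝ (Fin (n+1))),
      (∀ p, H p ∈ simplexBoundary v) ∧
      (∀ x : T, H (x, 0) = ∑ i, φ i x • v i) ∧
      (∀ x : T, H (x, 1) = ∑ i, ψ i x • v i) := by
  let H : C(T × I, EuclideanSpace ℝ (Fin (n+1))) :=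
    ⟨fun p => ∑ i, ((1 - (p.2 : ℝ)) * φ i p.1 + p.2 * ψ i p.1) • v i, by fun_prop⟩
  refine ⟨H, fun p => ?_, fun x => by simp [H], fun x => by simp [H]⟩
  exact (hφ.convexCombination hψ p.2).sum_smul_mem_simplexBoundary hUempty v p.1

/-- If `Φ = (φᵢ)` and `Ψ = (ψᵢ)` are two partitions of unity subordinate to an open cover
`U₀, …, U_{n+1}` (with empty total intersection) of a normal space `T`, then the associated
maps `f_Φ(x) = Σᵢ φᵢ(x) • vᵢ` and `f_Ψ(x) = Σᵢ ψᵢ(x) • vᵢ` are homotopic as maps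
`T → ∂Δ^{n+1}`: there is a homotopy through maps taking values in `∂Δ^{n+1}`. -/
theorem assoc_maps_homotopic (n : ℕ) (T : Type)
    [TopologicalSpace T] [NormalSpace T]
    (U : Fin (n+2) → Set T) (hUopen : ∀ i, IsOpen (U i))
    (hUcover : (⋃ i, U i) = Set.univ) (hUempty : (⋂ i, U i) = ∅)
    (φ ψ : Fin (n+2) → C(T, ℝ))
    (hφ : IsSubordinatePartitionOfUnity U φ) (hψ : IsSubordinatePartitionOfUnity U ψ)
    (v : Fin (n+2) → EuclideanSpace ℝ (Fin (n+1))) (hv : AffineIndependent ℝ v) :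
    ∃ H : C(T × unitInterval, EuclideanSpace ℝ (Fin (n+1))),
      (∀ p, H p ∈ simplexBoundary v) ∧
      (∀ x : T, H (x, 0) = ∑ i, φ i x • v i) ∧
      (∀ x : T, H (x, 1) = ∑ i, ψ i x • v i) :=
  assoc_maps_homotopic_general n T U hUempty φ ψ hφ hψ v
end
end

section
/- Let T be a normal space and (Sᵢ)_{i=0}^{n+1} an open cover of T with empty total intersection, with associated map f_S : T → ∂Δ^{n+1}. If F : T × [0,1] → ∂Δ^{n+1} is a homotopy with F(·,0) = f_S, then the preimages Qᵢ = F⁻¹(Bᵢ) of the open vertex stars form an open cover of T × [0,1] with empty total intersection whose restriction to T × {0} refines in the same pattern as the original construction (each Qᵢ ∩ (T × {0}) contains the support of the i-th partition function used to define f_S). -/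
open Set unitInterval

noncomputable section

/-- The open star `Bᵢ ⊆ ∂Δ^{n+1}` of the vertex `vᵢ`: points of the boundary of the simplex
whose `i`-th barycentric coordinate is positive. -/
def openStar {n : ℕ} (v : Fin (n+2) → EuclideanSpace ℝ (Fin (n+1))) (i : Fin (n+2)) :
    Set (EuclideanSpace ℝ (Fin (n+1))) :=
  {p | ∃ t : Fin (n+2) → ℝ, (∀ j, 0 ≤ t j) ∧ (∑ j, t j) = 1 ∧ (∃ j, t j = 0) ∧
    p = ∑ j, t j • v j ∧ 0 < t i}

/-! Barycentric coordinates with respect to the vertices are continuous (affine) functions on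
the ambient space, and on `∂Δ^{n+1}` they are the coefficients `tᵢ` in the definition of the
boundary and of the open stars. So `F⁻¹(Bᵢ)` is the preimage of `{coordᵢ > 0}`, hence open;
every point of the boundary has some positive coordinate, and some zero one, which excludes it
from one star. At time `0` the coefficients are `φᵢ(x)`, one of which vanishes because no point
lies in all the `Sᵢ`. -/

theorem AffineBasis.coord_sum_smul {ι k V : Type*} [Fintype ι] [Ring k] [AddCommGroup V]
    [Module k V] (b : AffineBasis ι k V) {t : ι → k} (ht : ∑ i, t i = 1) (i : ι) :
    b.coord i (∑ j, t j • b j) = t i := by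
  rw [← Finset.univ.affineCombination_eq_linear_combination b t ht]
  exact b.coord_apply_combination_of_mem (Finset.mem_univ i) ht

theorem IsSubordinatePartitionOfUnity.exists_eq_zero {T : Type} [TopologicalSpace T] {m : ℕ}
    {S : Fin m → Set T} {φ : Fin m → C(T, ℝ)} (hφ : IsSubordinatePartitionOfUnity S φ)
    (hS : ⋂ i, S i = ∅) (x : T) : ∃ i, φ i x = 0 := by
  by_contra! h
  have hx : x ∈ ⋂ i, S i := mem_iInter.2 fun i => hφ.subordinate i (subset_tsupport _ (h i))
  simp [hS] at hx

section OpenStar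

variable {n : ℕ} {v : Fin (n+2) → EuclideanSpace ℝ (Fin (n+1))}

def AffineIndependent.affineBasis (hv : AffineIndependent ℝ v) :
    AffineBasis (Fin (n+2)) ℝ (EuclideanSpace ℝ (Fin (n+1))) :=
  ⟨v, hv, by rw [hv.affineSpan_eq_top_iff_card_eq_finrank_add_one]; simp⟩

theorem AffineIndependent.coord_sum_smul (hv : AffineIndependent ℝ v) {t : Fin (n+2) → ℝ}
    (ht : ∑ i, t i = 1) (i : Fin (n+2)) : hv.affineBasis.coord i (∑ j, t j • v j) = t i :=
  hv.affineBasis.coord_sum_smul ht i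

theorem mem_openStar_iff (hv : AffineIndependent ℝ v) {p : EuclideanSpace ℝ (Fin (n+1))}
    (hp : p ∈ simplexBoundary v) (i : Fin (n+2)) :
    p ∈ openStar v i ↔ 0 < hv.affineBasis.coord i p := by
  constructor
  · rintro ⟨t, -, ht, -, rfl, hti⟩
    rwa [hv.coord_sum_smul ht]
  · obtain ⟨t, ht0, ht, htz, rfl⟩ := hp
    rw [hv.coord_sum_smul ht]
    exact fun hti => ⟨t, ht0, ht, htz, rfl, hti⟩

theorem isOpen_preimage_openStar {X : Type*} [TopologicalSpace X]
    {f : X → EuclideanSpace ℝ (Fin (n+1))} (hv : AffineIndependent ℝ v) (hf : Continuous f)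
    (hf_mem : ∀ x, f x ∈ simplexBoundary v) (i : Fin (n+2)) :
    IsOpen (f ⁻¹' openStar v i) := by
  have : f ⁻¹' openStar v i = f ⁻¹' {p | 0 < hv.affineBasis.coord i p} := by
    ext x
    exact mem_openStar_iff hv (hf_mem x) i
  rw [this]
  exact (isOpen_lt continuous_const
    (hv.affineBasis.coord i).continuous_of_finiteDimensional).preimage hf

theorem exists_mem_openStar {p : EuclideanSpace ℝ (Fin (n+1))} (hp : p ∈ simplexBoundary v) :
    ∃ i, p ∈ openStar v i := by
  obtain ⟨t, ht0, ht, htz, rfl⟩ := hp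
  obtain ⟨i, -, hi⟩ := Finset.exists_lt_of_sum_lt (s := Finset.univ) (f := 0) (g := t)
    (by simp [ht])
  exact ⟨i, t, ht0, ht, htz, rfl, hi⟩

theorem iInter_openStar_eq_empty (hv : AffineIndependent ℝ v) : ⋂ i, openStar v i = ∅ := by
  refine eq_empty_of_forall_notMem fun p hp => ?_
  obtain ⟨t, -, ht, ⟨j, hj⟩, rfl, -⟩ := mem_iInter.1 hp 0
  obtain ⟨t', -, ht', -, hp', htj'⟩ := mem_iInter.1 hp j
  have : t' j = t j := by rw [← hv.coord_sum_smul ht', ← hp', hv.coord_sum_smul ht]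
  linarith

end OpenStar

theorem preimages_of_open_stars_under_homotopy_general (n : ℕ) (T : Type)
    [TopologicalSpace T]
    (S : Fin (n+2) → Set T)
    (hSempty : (⋂ i, S i) = ∅)
    (φ : Fin (n+2) → C(T, ℝ)) (hφ : IsSubordinatePartitionOfUnity S φ)
    (v : Fin (n+2) → EuclideanSpace ℝ (Fin (n+1))) (hv : AffineIndependent ℝ v)
    (F : C(T × unitInterval, EuclideanSpace ℝ (Fin (n+1))))
    (hFmem : ∀ p, F p ∈ simplexBoundary v)
    (hF0 : ∀ x : T, F (x, 0) = ∑ i, φ i x • v i) :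
    (∀ i, IsOpen (F ⁻¹' openStar v i)) ∧
    (⋃ i, F ⁻¹' openStar v i) = Set.univ ∧
    (⋂ i, F ⁻¹' openStar v i) = ∅ ∧
    (∀ i (x : T), φ i x ≠ 0 → (x, (0 : unitInterval)) ∈ F ⁻¹' openStar v i) := by
  refine ⟨isOpen_preimage_openStar hv F.continuous hFmem, ?_, ?_, ?_⟩
  · exact iUnion_eq_univ_iff.2 fun p => exists_mem_openStar (hFmem p)
  · rw [← preimage_iInter, iInter_openStar_eq_empty hv, preimage_empty]
  · intro i x hix
    obtain ⟨j, hj⟩ := hφ.exists_eq_zero hSempty x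
    exact ⟨fun k => φ k x, fun k => hφ.nonneg k x, hφ.sum_eq_one x, ⟨j, hj⟩, hF0 x,
      (hφ.nonneg i x).lt_of_ne' hix⟩

/-- Let `S` be an open cover with empty total intersection of a normal space `T`, `φ` a
subordinate partition of unity with associated map `f_S(x) = Σ φᵢ(x) • vᵢ`, and
`F : T × [0,1] → ∂Δ^{n+1}` a homotopy with `F(·,0) = f_S`. Then the preimages
`Qᵢ = F⁻¹(Bᵢ)` of the open vertex stars form an open cover of `T × [0,1]` with empty total
intersection, and on `T × {0}` each `Qᵢ` contains the (open) support of `φᵢ`. -/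
theorem preimages_of_open_stars_under_homotopy (n : ℕ) (T : Type)
    [TopologicalSpace T] [NormalSpace T]
    (S : Fin (n+2) → Set T) (hSopen : ∀ i, IsOpen (S i))
    (hScover : (⋃ i, S i) = Set.univ) (hSempty : (⋂ i, S i) = ∅)
    (φ : Fin (n+2) → C(T, ℝ)) (hφ : IsSubordinatePartitionOfUnity S φ)
    (v : Fin (n+2) → EuclideanSpace ℝ (Fin (n+1))) (hv : AffineIndependent ℝ v)
    (F : C(T × unitInterval, EuclideanSpace ℝ (Fin (n+1))))
    (hFmem : ∀ p, F p ∈ simplexBoundary v)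
    (hF0 : ∀ x : T, F (x, 0) = ∑ i, φ i x • v i) :
    (∀ i, IsOpen (F ⁻¹' openStar v i)) ∧
    (⋃ i, F ⁻¹' openStar v i) = Set.univ ∧
    (⋂ i, F ⁻¹' openStar v i) = ∅ ∧
    (∀ i (x : T), φ i x ≠ 0 → (x, (0 : unitInterval)) ∈ F ⁻¹' openStar v i) :=
  preimages_of_open_stars_under_homotopy_general n T S hSempty φ hφ v hv F hFmem hF0
end
end
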